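/- arXiv:2404.17530 — 2 statements merged into one kernel-verified Lean document; each statement's English description precedes it below -/
import Mathlib

section
/- If Eve wins the 1-token game on a nondeterministic parity automaton A, then Eve wins the 1-token game on Delay(A). -/
open Filter

/-- A transition: source state, letter, priority, target state. -/
abbrev Tr (Q A : Type) := Q × A × ℕ × Q

def Tr.src {Q A : Type} (t : Tr Q A) : Q := t.1
def Tr.lbl {Q A : Type} (t : Tr Q A) : A := t.2.1
def Tr.pri {Q A : Type} (t : Tr Q A) : ℕ := t.2.2.1
def Tr.tgt {Q A : Type} (t : Tr Q A) : Q := t.2.2.2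

/-- A nondeterministic parity automaton with state type `Q` and alphabet `A`:
an initial state and a set of transitions (finiteness of `Q`, `A` and of the
transition set is assumed in theorem statements). -/
structure NPA (Q A : Type) where
  init : Q
  delta : Set (Tr Q A)

variable {Q P A : Type}

/-- Prepend a letter to an infinite word. -/
def wcons (a : A) (w : ℕ → A) : ℕ → A
  | 0 => a
  | n + 1 => w n

/-- Prepend a finite word to an infinite word. -/
def wcat : List A → (ℕ → A) → ℕ → A
  | [], w => w
  | a :: u, w => wcons a (wcat u w)

/-- The list of the first `n` values of `f`. -/
def pref {α : Type} (f : ℕ → α) (n : ℕ) : List α := (List.range n).map f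

/-- The parity acceptance condition on an infinite sequence of priorities:
the highest priority occurring infinitely often is even. -/
def ParityAccept (pr : ℕ → ℕ) : Prop :=
  ∃ c, Even c ∧ (∃ᶠ n in atTop, pr n = c) ∧ ∀ d, (∃ᶠ n in atTop, pr n = d) → d ≤ c

namespace NPA

/-- `ρ` is a run of `M` on the infinite word `w` starting at state `q`. -/
def IsRun (M : NPA Q A) (q : Q) (w : ℕ → A) (ρ : ℕ → Tr Q A) : Prop :=
  Tr.src (ρ 0) = q ∧
    ∀ n, ρ n ∈ M.delta ∧ Tr.lbl (ρ n) = w n ∧ Tr.src (ρ (n + 1)) = Tr.tgt (ρ n)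

/-- The language of `M` started at state `q`. -/
def LangFrom (M : NPA Q A) (q : Q) : Set (ℕ → A) :=
  {w | ∃ ρ, M.IsRun q w ρ ∧ ParityAccept fun n => Tr.pri (ρ n)}

/-- The language of `M`. -/
def Lang (M : NPA Q A) : Set (ℕ → A) := M.LangFrom M.init

/-- A Büchi automaton: all priorities are 1 or 2. -/
def IsBuchi (M : NPA Q A) : Prop := ∀ t ∈ M.delta, Tr.pri t = 1 ∨ Tr.pri t = 2

/-- A safety automaton: all priorities are 0. -/
def IsSafety (M : NPA Q A) : Prop := ∀ t ∈ M.delta, Tr.pri t = 0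

/-- Determinism: at most one outgoing transition per state and letter. -/
def Deterministic (M : NPA Q A) : Prop :=
  ∀ t₁ ∈ M.delta, ∀ t₂ ∈ M.delta,
    Tr.src t₁ = Tr.src t₂ → Tr.lbl t₁ = Tr.lbl t₂ → t₁ = t₂

/-- The transition `t` is language-preserving: `L(M, tgt t) = (lbl t)⁻¹ L(M, src t)`. -/
def LangPres (M : NPA Q A) (t : Tr Q A) : Prop :=
  M.LangFrom (Tr.tgt t) = {w | wcons (Tr.lbl t) w ∈ M.LangFrom (Tr.src t)}

/-- Semantic determinism: every transition is language-preserving. -/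
def SemDet (M : NPA Q A) : Prop := ∀ t ∈ M.delta, M.LangPres t

/-- `M.FinRun q u p`: there is a finite run of `M` on the finite word `u`
from state `q` ending in state `p`. -/
inductive FinRun (M : NPA Q A) : Q → List A → Q → Prop
  | nil (q : Q) : FinRun M q [] q
  | cons {q : Q} {a : A} {c : ℕ} {p r : Q} {u : List A} :
      (q, a, c, p) ∈ M.delta → FinRun M p u r → FinRun M q (a :: u) r

/-- `ρ` (restricted to indices `< u.length`) is a finite run of `M` on the
finite word `u` starting at state `q`. -/
def IsFinRunOn (M : NPA Q A) (q : Q) (u : List A) (ρ : ℕ → Tr Q A) : Prop :=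
  (0 < u.length → Tr.src (ρ 0) = q) ∧
    ∀ i, (h : i < u.length) →
      ρ i ∈ M.delta ∧ Tr.lbl (ρ i) = u.get ⟨i, h⟩ ∧
        (i + 1 < u.length → Tr.src (ρ (i + 1)) = Tr.tgt (ρ i))

/-- History-determinism: Eve has a strategy in the history-determinism game,
choosing in each round a transition depending only on the letters played so
far (her own previous moves are determined by the strategy), which always
builds a run and builds an accepting run whenever Adam's word is in `L(M)`. -/
def HD (M : NPA Q A) : Prop :=
  ∃ σ : List A → Tr Q A,
    ∀ w : ℕ → A,
      M.IsRun M.init w (fun n => σ (pref w (n + 1))) ∧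
        (w ∈ M.Lang → ParityAccept fun n => Tr.pri (σ (pref w (n + 1))))

end NPA

/-- `B` simulates `M`: Eve has a strategy in the simulation game (in each round
Adam plays a letter and a transition of `M`, then Eve plays a transition of `B`)
such that against every word together with a run of `M` on it, she builds a run
of `B`, which is accepting whenever Adam's run is accepting. -/
def Simulates (B : NPA P A) (M : NPA Q A) : Prop :=
  ∃ σ : List (A × Tr Q A) → Tr P A,
    ∀ (w : ℕ → A) (ρ : ℕ → Tr Q A), M.IsRun M.init w ρ →
      B.IsRun B.init w (fun n => σ (pref (fun i => (w i, ρ i)) (n + 1))) ∧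
        ((ParityAccept fun n => Tr.pri (ρ n)) →
          ParityAccept fun n => Tr.pri (σ (pref (fun i => (w i, ρ i)) (n + 1))))

/-- `B` step-ahead simulates `M`: as in the simulation game, but in each round
Eve picks her transition of `B` (knowing the current letter and all previous
rounds) before Adam picks his transition of `M`. -/
def StepAheadSimulates (B : NPA P A) (M : NPA Q A) : Prop :=
  ∃ σ : List (A × Tr Q A) → A → Tr P A,
    ∀ (w : ℕ → A) (ρ : ℕ → Tr Q A), M.IsRun M.init w ρ →
      B.IsRun B.init w (fun n => σ (pref (fun i => (w i, ρ i)) n) (w n)) ∧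
        ((ParityAccept fun n => Tr.pri (ρ n)) →
          ParityAccept fun n => Tr.pri (σ (pref (fun i => (w i, ρ i)) n) (w n)))

/-- Eve wins the `k`-token game on `M`: she has a strategy, choosing in each
round a transition from the current letter and the full history of previous
rounds (letters and Adam's `k` transitions), such that against every word and
every `k` runs of Adam on it, she builds a run of `M`, which is accepting
whenever at least one of Adam's `k` runs is accepting. -/
def EveWinsTokenGame (k : ℕ) (M : NPA Q A) : Prop :=
  ∃ σ : List (A × (Fin k → Tr Q A)) → A → Tr Q A,
    ∀ (w : ℕ → A) (ρ : Fin k → ℕ → Tr Q A), (∀ i, M.IsRun M.init w (ρ i)) →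
      M.IsRun M.init w (fun n => σ (pref (fun m => (w m, fun i => ρ i m)) n) (w n)) ∧
        ((∃ i, ParityAccept fun n => Tr.pri (ρ i n)) →
          ParityAccept fun n => Tr.pri (σ (pref (fun m => (w m, fun i => ρ i m)) n) (w n)))

/-- The state of Adam's token before round `n` in the Joker game, given his
moves `am` (a transition together with a Joker flag in each round). -/
def jokerAdamState (M : NPA Q A) (am : ℕ → Tr Q A × Bool) : ℕ → Q
  | 0 => M.init
  | n + 1 => Tr.tgt (am n).1

/-- Validity of Adam's moves `am` in the Joker game against Eve's run `ρE`:
in each round Adam's transition is a transition of `M` on the current letter;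
it starts at his token's state if he does not play Joker, and at the current
state of Eve's token if he plays Joker. -/
def JokerValid (M : NPA Q A) (w : ℕ → A) (am : ℕ → Tr Q A × Bool)
    (ρE : ℕ → Tr Q A) : Prop :=
  ∀ n, (am n).1 ∈ M.delta ∧ Tr.lbl (am n).1 = w n ∧
    ((am n).2 = false → Tr.src (am n).1 = jokerAdamState M am n) ∧
    ((am n).2 = true → Tr.src (am n).1 = Tr.src (ρE n))

/-- Eve wins the Joker game on `M`: she has a strategy such that against every
valid play of Adam she builds a run of `M`, which is accepting whenever Adam
plays only finitely many Jokers and his sequence of transitions satisfies the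
parity acceptance condition. -/
def EveWinsJoker (M : NPA Q A) : Prop :=
  ∃ σ : List (A × (Tr Q A × Bool)) → A → Tr Q A,
    ∀ (w : ℕ → A) (am : ℕ → Tr Q A × Bool),
      JokerValid M w am (fun n => σ (pref (fun m => (w m, am m)) n) (w n)) →
        M.IsRun M.init w (fun n => σ (pref (fun m => (w m, am m)) n) (w n)) ∧
          (({n | (am n).2 = true}.Finite ∧ (ParityAccept fun n => Tr.pri (am n).1)) →
            ParityAccept fun n => Tr.pri (σ (pref (fun m => (w m, am m)) n) (w n)))

/-- The `Delay` construction: states are `Q × A` plus a fresh initial state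
(`none`); from the initial state, on each letter `a` move with priority 0 to
`(init, a)`; from `(p, a)`, on each letter `a'`, for each transition
`p →(a:c) q` of `M`, move with priority `c` to `(q, a')`. -/
def NPA.Delay (M : NPA Q A) : NPA (Option (Q × A)) A where
  init := none
  delta :=
    {t | (∃ a : A, t = (none, a, 0, some (M.init, a))) ∨
      ∃ u ∈ M.delta, ∃ a' : A,
        t = (some (Tr.src u, Tr.lbl u), a', Tr.pri u, some (Tr.tgt u, a'))}

/-- The state type of the `k`-fold `Delay` of an automaton over `Q`, `A`. -/
def DelayState (Q A : Type) : ℕ → Type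
  | 0 => Q
  | k + 1 => Option (DelayState Q A k × A)

/-- `k`-fold application of `Delay`. -/
def NPA.DelayIter (M : NPA Q A) : (k : ℕ) → NPA (DelayState Q A k) A
  | 0 => M
  | k + 1 => (M.DelayIter k).Delay

/-- The subautomaton of `M` keeping exactly the language-preserving transitions. -/
def NPA.residual (M : NPA Q A) : NPA Q A where
  init := M.init
  delta := {t ∈ M.delta | M.LangPres t}

/-! ### Auxiliary material for STATEMENT 11 -/

/-- Decode a `Delay` transition back to a transition of `M`. -/
def decT {Q A : Type} (M : NPA Q A) (t : Tr (Option (Q × A)) A) : Tr Q A :=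
  match t with
  | (some (p, a), _, c, some (q, _)) => (p, a, c, q)
  | (_, a', c, _) => (M.init, a', c, M.init)

/-- Eve's strategy on `Delay M` induced by a strategy `σ` on `M`. -/
def delayStrat {Q A : Type} (M : NPA Q A)
    (σ : List (A × (Fin 1 → Tr Q A)) → A → Tr Q A)
    (h : List (A × (Fin 1 → Tr (Option (Q × A)) A))) (a : A) :
    Tr (Option (Q × A)) A :=
  if h.length = 0 then (none, a, 0, some (M.init, a))
  else
    let d : A × (Fin 1 → Tr (Option (Q × A)) A) := (a, fun _ => (none, a, 0, none))
    let τ := σ ((List.range (h.length - 1)).map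
          (fun m => ((h.getD m d).1, fun _ => decT M ((h.getD (m + 1) d).2 0))))
        (h.getD (h.length - 1) d).1
    (some (Tr.src τ, Tr.lbl τ), a, Tr.pri τ, some (Tr.tgt τ, a))

lemma pref_length {α : Type} (f : ℕ → α) (n : ℕ) : (pref f n).length = n := by
  simp [pref]

lemma pref_getD {α : Type} (f : ℕ → α) {m n : ℕ} (h : m < n) (d : α) :
    (pref f n).getD m d = f m := by
  simp [pref, List.getD_eq_getElem?_getD, List.getElem?_map, List.getElem?_range, h]

lemma delayStrat_nil {Q A : Type} (M : NPA Q A)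
    (σ : List (A × (Fin 1 → Tr Q A)) → A → Tr Q A) (a : A)
    (F : ℕ → A × (Fin 1 → Tr (Option (Q × A)) A)) :
    delayStrat M σ (pref F 0) a = (none, a, 0, some (M.init, a)) := by
  simp [delayStrat, pref]

lemma delayStrat_succ {Q A : Type} (M : NPA Q A)
    (σ : List (A × (Fin 1 → Tr Q A)) → A → Tr Q A) (a : A)
    (F : ℕ → A × (Fin 1 → Tr (Option (Q × A)) A)) (n : ℕ) :
    delayStrat M σ (pref F (n + 1)) a =
      (fun τ => (some (Tr.src τ, Tr.lbl τ), a, Tr.pri τ, some (Tr.tgt τ, a)))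
        (σ ((List.range n).map
            (fun m => ((F m).1, fun _ : Fin 1 => decT M ((F (m + 1)).2 0)))) (F n).1) := by
  rw [delayStrat, if_neg (by simp [pref_length])]
  simp only [pref_length, Nat.add_sub_cancel]
  have hlist : ∀ d : A × (Fin 1 → Tr (Option (Q × A)) A),
      (List.range n).map
          (fun m => (((pref F (n + 1)).getD m d).1,
            fun _ : Fin 1 => decT M (((pref F (n + 1)).getD (m + 1) d).2 0))) =
        (List.range n).map
          (fun m => ((F m).1, fun _ : Fin 1 => decT M ((F (m + 1)).2 0))) := by
    intro d
    apply List.map_congr_left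
    intro m hm
    rw [List.mem_range] at hm
    rw [pref_getD _ (by omega), pref_getD _ (by omega)]
  rw [hlist, pref_getD _ (by omega)]

lemma freq_shift {f g : ℕ → ℕ} (h : ∀ n, g (n + 1) = f n) (c : ℕ) :
    (∃ᶠ n in atTop, f n = c) ↔ (∃ᶠ n in atTop, g n = c) := by
  simp only [Filter.frequently_atTop]
  constructor
  · intro H N
    obtain ⟨b, hb, hfb⟩ := H N
    exact ⟨b + 1, by omega, by rw [h]; exact hfb⟩
  · intro H N
    obtain ⟨b, hb, hgb⟩ := H (N + 1)
    obtain ⟨m, rfl⟩ : ∃ m, b = m + 1 := ⟨b - 1, by omega⟩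
    exact ⟨m, by omega, by rw [← h]; exact hgb⟩

lemma parity_shift {f g : ℕ → ℕ} (h : ∀ n, g (n + 1) = f n) :
    ParityAccept f ↔ ParityAccept g := by
  constructor
  · rintro ⟨c, hc, hfreq, hmax⟩
    exact ⟨c, hc, (freq_shift h c).mp hfreq, fun d hd => hmax d ((freq_shift h d).mpr hd)⟩
  · rintro ⟨c, hc, hfreq, hmax⟩
    exact ⟨c, hc, (freq_shift h c).mpr hfreq, fun d hd => hmax d ((freq_shift h d).mp hd)⟩

/-- If Eve wins the 1-token game on a parity automaton A, then she wins
the 1-token game on Delay(A). -/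
theorem one_token_on_delay {Q A : Type} [Finite Q] [Finite A]
    (M : NPA Q A) (hfin : M.delta.Finite) (h : EveWinsTokenGame 1 M) :
    EveWinsTokenGame 1 M.Delay := by
  obtain ⟨σ, hσ⟩ := h
  refine ⟨delayStrat M σ, ?_⟩
  intro w ρ hρ
  obtain ⟨hsrc0, hstep⟩ := hρ 0
  -- decode Adam's run
  set u : ℕ → Tr Q A := fun m => decT M (ρ 0 (m + 1)) with hu
  have h0 : ρ 0 0 = (none, w 0, 0, some (M.init, w 0)) := by
    obtain ⟨hmem, hlbl, -⟩ := hstep 0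
    rcases hmem with ⟨a, ha⟩ | ⟨v, hv, a', ha'⟩
    · rw [ha] at hlbl ⊢
      simp only [Tr.lbl] at hlbl
      rw [hlbl]
    · rw [ha'] at hsrc0
      simp [Tr.src, NPA.Delay] at hsrc0
  have step : ∀ n s, Tr.tgt (ρ 0 n) = some (s, w n) →
      u n ∈ M.delta ∧ Tr.lbl (u n) = w n ∧ Tr.src (u n) = s ∧
      Tr.pri (ρ 0 (n + 1)) = Tr.pri (u n) ∧
      Tr.tgt (ρ 0 (n + 1)) = some (Tr.tgt (u n), w (n + 1)) := by
    intro n s hs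
    obtain ⟨hmem, hlbl, -⟩ := hstep (n + 1)
    have hsrc : Tr.src (ρ 0 (n + 1)) = some (s, w n) := by
      rw [(hstep n).2.2, hs]
    rcases hmem with ⟨a, ha⟩ | ⟨v, hv, a', ha'⟩
    · rw [ha] at hsrc
      simp [Tr.src] at hsrc
    · have hdec : u n = v := by
        rw [hu]
        simp only [ha', decT]
        rfl
      have hsrc' : Tr.src v = s ∧ Tr.lbl v = w n := by
        rw [ha'] at hsrc
        simp only [Tr.src, Option.some.injEq, Prod.mk.injEq] at hsrc
        exact hsrc
      have ha'' : a' = w (n + 1) := by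
        rw [ha'] at hlbl
        exact hlbl
      refine ⟨hdec ▸ hv, hdec ▸ hsrc'.2, hdec ▸ hsrc'.1, ?_, ?_⟩
      · rw [ha', hdec]; rfl
      · rw [ha', hdec, ha'']; rfl
  have h0' : Tr.tgt (ρ 0 0) = some (M.init, w 0) := by rw [h0]; rfl
  have tgtfact : ∀ n, Tr.tgt (ρ 0 n) = some (Tr.src (u n), w n) := by
    intro n
    induction n with
    | zero => rw [(step 0 M.init h0').2.2.1, h0']
    | succ m ih =>
      have hm := step m (Tr.src (u m)) ih
      rw [(step (m + 1) (Tr.tgt (u m)) hm.2.2.2.2).2.2.1]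
      exact hm.2.2.2.2
  have hfacts : ∀ n, u n ∈ M.delta ∧ Tr.lbl (u n) = w n ∧
      Tr.src (u (n + 1)) = Tr.tgt (u n) ∧ Tr.pri (ρ 0 (n + 1)) = Tr.pri (u n) := by
    intro n
    have hn := step n (Tr.src (u n)) (tgtfact n)
    have hn1 := step (n + 1) (Tr.tgt (u n)) hn.2.2.2.2
    exact ⟨hn.1, hn.2.1, hn1.2.2.1, hn.2.2.2.1⟩
  have hrunu : M.IsRun M.init w u :=
    ⟨(step 0 M.init h0').2.2.1, fun n => ⟨(hfacts n).1, (hfacts n).2.1, (hfacts n).2.2.1⟩⟩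
  obtain ⟨hτrun, hτacc⟩ := hσ w (fun _ => u) (fun _ => hrunu)
  set τ : ℕ → Tr Q A := fun n => σ (pref (fun m => (w m, fun _ : Fin 1 => u m)) n) (w n)
    with hτ
  have hτrun' : M.IsRun M.init w τ := hτrun
  -- Eve's run on Delay
  -- Eve's run on Delay: the function built by the strategy
  have hE0 : delayStrat M σ (pref (fun m => (w m, fun i => ρ i m)) 0) (w 0)
      = (none, w 0, 0, some (M.init, w 0)) :=
    delayStrat_nil M σ (w 0) _
  have hES : ∀ n a, delayStrat M σ (pref (fun m => (w m, fun i => ρ i m)) (n + 1)) a =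
      (some (Tr.src (τ n), Tr.lbl (τ n)), a, Tr.pri (τ n), some (Tr.tgt (τ n), a)) := by
    intro n a
    rw [delayStrat_succ M σ a (fun m => (w m, fun i => ρ i m)) n]
    rfl
  have hτfacts := hτrun'.2
  have hτsrc0 : Tr.src (τ 0) = M.init := hτrun'.1
  constructor
  · refine ⟨?_, ?_⟩
    · show Tr.src (delayStrat M σ (pref (fun m => (w m, fun i => ρ i m)) 0) (w 0)) =
        M.Delay.init
      rw [hE0]; rfl
    · intro n
      refine ⟨?_, ?_, ?_⟩
      · show delayStrat M σ (pref (fun m => (w m, fun i => ρ i m)) n) (w n) ∈ M.Delay.delta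
        cases n with
        | zero =>
          rw [hE0]
          exact Or.inl ⟨w 0, rfl⟩
        | succ m =>
          rw [hES m]
          exact Or.inr ⟨τ m, (hτfacts m).1, w (m + 1), rfl⟩
      · show Tr.lbl (delayStrat M σ (pref (fun m => (w m, fun i => ρ i m)) n) (w n)) = w n
        cases n with
        | zero => rw [hE0]; rfl
        | succ m => rw [hES m]; rfl
      · show Tr.src (delayStrat M σ (pref (fun m => (w m, fun i => ρ i m)) (n + 1))
            (w (n + 1))) =
          Tr.tgt (delayStrat M σ (pref (fun m => (w m, fun i => ρ i m)) n) (w n))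
        cases n with
        | zero =>
          rw [hES 0, hE0]
          show some (Tr.src (τ 0), Tr.lbl (τ 0)) = some (M.init, w 0)
          rw [hτsrc0, (hτfacts 0).2.1]
        | succ m =>
          rw [hES (m + 1), hES m]
          show some (Tr.src (τ (m + 1)), Tr.lbl (τ (m + 1))) = some (Tr.tgt (τ m), w (m + 1))
          rw [(hτfacts m).2.2, (hτfacts (m + 1)).2.1]
  · rintro ⟨i, hacc⟩
    have hacc0 : ParityAccept fun n => Tr.pri (ρ 0 n) := by
      rwa [Subsingleton.elim (0 : Fin 1) i]
    have haccu : ParityAccept fun n => Tr.pri (u n) :=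
      (parity_shift (fun n => (hfacts n).2.2.2)).mpr hacc0
    have haccτ : ParityAccept fun n => Tr.pri (τ n) := hτacc ⟨0, haccu⟩
    have hEpri : ∀ n,
        Tr.pri (delayStrat M σ (pref (fun m => (w m, fun i => ρ i m)) (n + 1)) (w (n + 1)))
          = Tr.pri (τ n) := by
      intro n
      rw [hES n]; rfl
    exact (parity_shift hEpri).mp haccτ
end

section
/- Suppose Eve wins the Joker game on a nondeterministic parity automaton A, and let B be the subautomaton of A obtained by removing all transitions that are not language-preserving. Then: (1) L(A) = L(B); (2) Eve wins the Joker game on B; and (3) if B is history-deterministic, then so is A. -/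
open Filter

variable {Q P A : Type}

section Aux
variable {Q A : Type}

lemma freq_shift_s17 {p : ℕ → Prop} (N : ℕ) :
    (∃ᶠ k in atTop, p (k + N)) ↔ ∃ᶠ n in atTop, p n := by
  rw [frequently_atTop, frequently_atTop]
  constructor
  · intro h a
    obtain ⟨b, hb, hp⟩ := h a
    exact ⟨b + N, le_trans hb (Nat.le_add_right _ _), hp⟩
  · intro h a
    obtain ⟨b, hb, hp⟩ := h (a + N)
    refine ⟨b - N, by omega, ?_⟩
    have hb' : b - N + N = b := by omega
    rw [hb']; exact hp

lemma parity_shift_s17 {pr : ℕ → ℕ} (N : ℕ) :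
    ParityAccept (fun k => pr (k + N)) ↔ ParityAccept pr := by
  unfold ParityAccept
  constructor
  · rintro ⟨c, hc, hfreq, hmax⟩
    exact ⟨c, hc, (freq_shift_s17 (p := fun n => pr n = c) N).mp hfreq,
      fun d hd => hmax d ((freq_shift_s17 (p := fun n => pr n = d) N).mpr hd)⟩
  · rintro ⟨c, hc, hfreq, hmax⟩
    exact ⟨c, hc, (freq_shift_s17 (p := fun n => pr n = c) N).mpr hfreq,
      fun d hd => hmax d ((freq_shift_s17 (p := fun n => pr n = d) N).mp hd)⟩

lemma pref_congr {α : Type} {f g : ℕ → α} {n : ℕ} (h : ∀ i < n, f i = g i) :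
    pref f n = pref g n := by
  unfold pref
  apply List.map_congr_left
  intro i hi
  exact h i (List.mem_range.mp hi)

end Aux

section Core
variable {Q A : Type}

lemma joker_langpres (M : NPA Q A) (σ : List (A × (Tr Q A × Bool)) → A → Tr Q A)
    (hσ : ∀ (w : ℕ → A) (am : ℕ → Tr Q A × Bool),
      JokerValid M w am (fun n => σ (pref (fun m => (w m, am m)) n) (w n)) →
        M.IsRun M.init w (fun n => σ (pref (fun m => (w m, am m)) n) (w n)) ∧
          (({n | (am n).2 = true}.Finite ∧ (ParityAccept fun n => Tr.pri (am n).1)) →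
            ParityAccept fun n => Tr.pri (σ (pref (fun m => (w m, am m)) n) (w n))))
    (w : ℕ → A) (am : ℕ → Tr Q A × Bool)
    (hv : JokerValid M w am (fun n => σ (pref (fun m => (w m, am m)) n) (w n)))
    (n : ℕ) : M.LangPres (σ (pref (fun m => (w m, am m)) n) (w n)) := by
  set ρE : ℕ → Tr Q A := fun n => σ (pref (fun m => (w m, am m)) n) (w n) with hρE
  obtain ⟨hrun, -⟩ := hσ w am hv
  set t : Tr Q A := ρE n with ht
  have htδ : t ∈ M.delta := (hrun.2 n).1
  have hlbl : Tr.lbl t = w n := (hrun.2 n).2.1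
  unfold NPA.LangPres
  ext v
  simp only [Set.mem_setOf_eq]
  constructor
  · -- easy direction: extend an accepting run from tgt t by t
    rintro ⟨τ, hτ, hτa⟩
    refine ⟨fun k => Nat.rec t (fun j _ => τ j) k, ⟨rfl, ?_⟩, ?_⟩
    · intro k
      cases k with
      | zero =>
        refine ⟨htδ, rfl, ?_⟩
        show Tr.src (τ 0) = Tr.tgt t
        exact hτ.1
      | succ j =>
        refine ⟨(hτ.2 j).1, (hτ.2 j).2.1, ?_⟩
        exact (hτ.2 j).2.2
    · exact (parity_shift_s17 (pr := fun k => Tr.pri (Nat.rec t (fun j _ => τ j) k)) 1).mp hτa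
  · -- hard direction: Adam Jokers onto Eve's token and plays an accepting run
    intro hv'
    obtain ⟨τ, hτ, hτa⟩ := hv'
    classical
    set w' : ℕ → A := fun k => if k ≤ n then w k else v (k - (n + 1)) with hw'
    set am' : ℕ → Tr Q A × Bool := fun k =>
      if k < n then am k else if k = n then (τ 0, true) else (τ (k - n), false) with ham'
    set ρE' : ℕ → Tr Q A := fun k => σ (pref (fun i => (w' i, am' i)) k) (w' k) with hρE'
    have hw'le : ∀ m ≤ n, w' m = w m := fun m hm => if_pos hm
    have hw'gt : ∀ j, w' (n + 1 + j) = v j := by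
      intro j
      have h1 : ¬ (n + 1 + j ≤ n) := by omega
      have h2 : n + 1 + j - (n + 1) = j := by omega
      simp only [hw', h1, if_false, h2]
    have ham'lt : ∀ m < n, am' m = am m := fun m hm => if_pos hm
    have ham'n : am' n = (τ 0, true) := by simp [ham']
    have ham'gt : ∀ j, am' (n + 1 + j) = (τ (j + 1), false) := by
      intro j
      have h1 : ¬ (n + 1 + j < n) := by omega
      have h2 : ¬ (n + 1 + j = n) := by omega
      have h3 : n + 1 + j - n = j + 1 := by omega
      simp only [ham', h1, if_false, h2, h3]
    have hpref : ∀ m ≤ n, pref (fun i => (w' i, am' i)) m = pref (fun i => (w i, am i)) m := by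
      intro m hm
      apply pref_congr
      intro i hi
      rw [hw'le i (by omega), ham'lt i (by omega)]
    have hρeq : ∀ m ≤ n, ρE' m = ρE m := by
      intro m hm
      simp only [hρE', hρE, hpref m hm, hw'le m hm]
    -- Adam's lbl facts about τ
    have hτlbl0 : Tr.lbl (τ 0) = Tr.lbl t := (hτ.2 0).2.1
    have hτlbl : ∀ j, Tr.lbl (τ (j + 1)) = v j := fun j => (hτ.2 (j + 1)).2.1
    have hvalid' : JokerValid M w' am' ρE' := by
      intro k
      rcases lt_trichotomy k n with hk | hk | hk
      · obtain ⟨h1, h2, h3, h4⟩ := hv k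
        have hjas : jokerAdamState M am' k = jokerAdamState M am k := by
          cases k with
          | zero => rfl
          | succ m =>
            show Tr.tgt (am' m).1 = Tr.tgt (am m).1
            rw [ham'lt m (by omega)]
        rw [ham'lt k hk, hw'le k (le_of_lt hk), hjas, hρeq k (le_of_lt hk)]
        exact ⟨h1, h2, h3, h4⟩
      · subst hk
        rw [ham'n, hw'le k le_rfl]
        refine ⟨(hτ.2 0).1, by rw [hτlbl0, hlbl], by simp, ?_⟩
        intro _
        rw [hρeq k le_rfl, ← ht]
        exact hτ.1
      · obtain ⟨j, rfl⟩ : ∃ j, k = n + 1 + j := ⟨k - n - 1, by omega⟩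
        rw [ham'gt j, hw'gt j]
        refine ⟨(hτ.2 (j + 1)).1, hτlbl j, ?_, by simp⟩
        intro _
        show Tr.src (τ (j + 1)) = jokerAdamState M am' (n + 1 + j)
        have : jokerAdamState M am' (n + 1 + j) = Tr.tgt (am' (n + j)).1 := by
          have he : n + 1 + j = (n + j) + 1 := by omega
          rw [he]
          rfl
        rw [this]
        cases j with
        | zero =>
          rw [show n + 0 = n from rfl, ham'n]
          exact (hτ.2 0).2.2
        | succ i =>
          rw [show n + (i + 1) = n + 1 + i from by omega, ham'gt i]
          exact (hτ.2 (i + 1)).2.2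
    obtain ⟨hrun', hacc'⟩ := hσ w' am' hvalid'
    have hfinJ : {k | (am' k).2 = true}.Finite := by
      apply Set.Finite.subset (Set.finite_Iic n)
      intro k hk
      by_contra hk'
      have hkn : n < k := by simpa using hk'
      obtain ⟨j, rfl⟩ : ∃ j, k = n + 1 + j := ⟨k - n - 1, by omega⟩
      rw [Set.mem_setOf_eq, ham'gt j] at hk
      simp at hk
    have hpa : ParityAccept fun k => Tr.pri (am' k).1 := by
      apply (parity_shift_s17 (pr := fun k => Tr.pri (am' k).1) (n + 1)).mp
      have he : (fun j => Tr.pri (am' (j + (n + 1))).1) = fun j => Tr.pri (τ (j + 1)) := by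
        funext j
        rw [show j + (n + 1) = n + 1 + j from by omega, ham'gt j]
      rw [he]
      exact (parity_shift_s17 (pr := fun k => Tr.pri (τ k)) 1).mpr hτa
    have hAcc : ParityAccept fun k => Tr.pri (ρE' k) := hacc' ⟨hfinJ, hpa⟩
    -- the tail of Eve's run is an accepting run on v from tgt t
    refine ⟨fun j => ρE' (j + (n + 1)), ⟨?_, ?_⟩, ?_⟩
    · show Tr.src (ρE' (0 + (n + 1))) = Tr.tgt t
      rw [show 0 + (n + 1) = n + 1 from by omega]
      have h1 : Tr.src (ρE' (n + 1)) = Tr.tgt (ρE' n) := (hrun'.2 n).2.2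
      rw [h1, hρeq n le_rfl]
    · intro j
      refine ⟨(hrun'.2 (j + (n + 1))).1, ?_, ?_⟩
      · have := (hrun'.2 (j + (n + 1))).2.1
        rw [this, show j + (n + 1) = n + 1 + j from by omega, hw'gt j]
      · show Tr.src (ρE' (j + 1 + (n + 1))) = Tr.tgt (ρE' (j + (n + 1)))
        have h2 : Tr.src (ρE' (j + (n + 1) + 1)) = Tr.tgt (ρE' (j + (n + 1))) :=
          (hrun'.2 (j + (n + 1))).2.2
        rw [show j + 1 + (n + 1) = j + (n + 1) + 1 from by omega]
        exact h2
    · exact (parity_shift_s17 (pr := fun k => Tr.pri (ρE' k)) (n + 1)).mpr hAcc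

end Core

/-- If Eve wins the Joker game on a parity automaton A, and B is the
subautomaton of A obtained by removing all transitions that are not
language-preserving, then (1) L(A) = L(B), (2) Eve wins the Joker game on B, and
(3) if B is history-deterministic then so is A. -/
theorem joker_residual {Q A : Type} [Finite Q] [Finite A]
    (M : NPA Q A) (hfin : M.delta.Finite) (hJ : EveWinsJoker M) :
    M.Lang = M.residual.Lang ∧ EveWinsJoker M.residual ∧
      (M.residual.HD → M.HD) := by
  obtain ⟨σ, hσ⟩ := hJ
  have core := joker_langpres M σ hσ
  have hsub : M.residual.delta ⊆ M.delta := fun t ht => ht.1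
  have hrunsub : ∀ (q : Q) (w : ℕ → A) (ρ : ℕ → Tr Q A),
      M.residual.IsRun q w ρ → M.IsRun q w ρ := by
    intro q w ρ ⟨h0, h⟩
    exact ⟨h0, fun k => ⟨hsub (h k).1, (h k).2.1, (h k).2.2⟩⟩
  have hLsub : M.residual.Lang ⊆ M.Lang := by
    rintro w ⟨ρ, hρ, hρa⟩
    exact ⟨ρ, hrunsub _ _ _ hρ, hρa⟩
  have hL : M.Lang = M.residual.Lang := by
    apply Set.Subset.antisymm _ hLsub
    rintro w ⟨ρ, hρ, hρa⟩
    set am : ℕ → Tr Q A × Bool := fun k => (ρ k, false) with ham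
    have hvalid : JokerValid M w am
        (fun n => σ (pref (fun m => (w m, am m)) n) (w n)) := by
      intro k
      refine ⟨(hρ.2 k).1, (hρ.2 k).2.1, ?_, by simp [ham]⟩
      intro _
      cases k with
      | zero => exact hρ.1
      | succ m =>
        show Tr.src (ρ (m + 1)) = Tr.tgt (am m).1
        exact (hρ.2 m).2.2
    obtain ⟨hrun, hacc⟩ := hσ w am hvalid
    refine ⟨fun n => σ (pref (fun m => (w m, am m)) n) (w n), ⟨hrun.1, ?_⟩, ?_⟩
    · intro k
      exact ⟨⟨(hrun.2 k).1, core w am hvalid k⟩, (hrun.2 k).2.1, (hrun.2 k).2.2⟩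
    · apply hacc
      constructor
      · convert Set.finite_empty
        ext k
        simp [ham]
      · exact hρa
  refine ⟨hL, ⟨σ, ?_⟩, ?_⟩
  · -- Eve wins the Joker game on the residual automaton with the same strategy
    intro w am hvR
    have hjas : ∀ k, jokerAdamState M.residual am k = jokerAdamState M am k := by
      intro k
      cases k with
      | zero => rfl
      | succ m => rfl
    have hvM : JokerValid M w am
        (fun n => σ (pref (fun m => (w m, am m)) n) (w n)) := by
      intro k
      obtain ⟨h1, h2, h3, h4⟩ := hvR k
      exact ⟨hsub h1, h2, fun hf => (hjas k) ▸ h3 hf, h4⟩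
    obtain ⟨hrun, hacc⟩ := hσ w am hvM
    refine ⟨⟨hrun.1, ?_⟩, hacc⟩
    intro k
    exact ⟨⟨(hrun.2 k).1, core w am hvM k⟩, (hrun.2 k).2.1, (hrun.2 k).2.2⟩
  · -- HD transfer
    rintro ⟨σ', hσ'⟩
    refine ⟨σ', fun w => ⟨hrunsub _ _ _ (hσ' w).1, fun hw => (hσ' w).2 ?_⟩⟩
    show w ∈ M.residual.Lang
    rw [← hL]
    exact hw
end
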